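/- Let L be an even positive definite lattice of rank l, let G be a subgroup of O(L), and let φ_j be a G-invariant weak Jacobi form of weight k_j and index m_j associated to L for 1 ≤ j ≤ l+1. If r ∈ L is a primitive vector whose reflection σ_r belongs to G, then the Jacobian J(φ_1,…,φ_{l+1}) vanishes on the set D_r(τ) = {(τ,z) ∈ ℍ × (L⊗ℂ) : ⟨r^∨, z⟩ ∈ ℤτ ⊕ ℤ}. -/

import Mathlib

/-!
On the mirror `⟨r^∨, z⟩ = aτ + b`, so `σ_r z = z - (aτ + b) r`: the points `z` and `σ_r z` differ
by the lattice translation `τ • (a r) + b r`. A linear symmetry `S` of all `φ_j` multiplies the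
Jacobian by `det S`, hence `J(z) = -J(σ_r z)`. A translation multiplies each `φ_j` by
`exp (m_j f)` with one `f` for all `j`; because the first row of the Jacobian is `(m_j φ_j)`, the
extra terms in the derivative rows are multiples of it, so `J` only picks up `∏ exp (m_j f)`,
which is `1` at `σ_r z` because the lattice is even. Hence `J(z) = J(σ_r z) = -J(z)`.
-/

open Complex Matrix

noncomputable section

/-- The ℂ-bilinear pairing on `ℂ^l` induced by an integral Gram matrix `M`. -/
def pairC {l : ℕ} (M : Matrix (Fin l) (Fin l) ℤ) (v w : Fin l → ℂ) : ℂ :=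
  ∑ i, ∑ j, v i * (M i j : ℂ) * w j

/-- The ℚ-bilinear pairing on `ℚ^l` induced by an integral Gram matrix `M`. -/
def pairQ {l : ℕ} (M : Matrix (Fin l) (Fin l) ℤ) (v w : Fin l → ℚ) : ℚ :=
  ∑ i, ∑ j, v i * (M i j : ℚ) * w j

def zc {l : ℕ} (x : Fin l → ℤ) : Fin l → ℂ := fun i => (x i : ℂ)
def qc {l : ℕ} (x : Fin l → ℚ) : Fin l → ℂ := fun i => (x i : ℂ)

/-- `M` is the Gram matrix of an even positive definite lattice. -/
structure IsEvenPosDef {l : ℕ} (M : Matrix (Fin l) (Fin l) ℤ) : Prop where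
  symm : M.IsSymm
  even_diag : ∀ i, Even (M i i)
  posDef : (M.map (Int.cast : ℤ → ℝ)).PosDef

/-- `G` is a subgroup of the integral orthogonal group `O(L)` of the lattice with
Gram matrix `M`. -/
structure IsOrthSubgroup {l : ℕ} (M : Matrix (Fin l) (Fin l) ℤ)
    (G : Set (Matrix (Fin l) (Fin l) ℤ)) : Prop where
  one_mem : 1 ∈ G
  mul_mem : ∀ σ₁ ∈ G, ∀ σ₂ ∈ G, σ₁ * σ₂ ∈ G
  inv_mem : ∀ σ ∈ G, ∃ σ' ∈ G, σ * σ' = 1 ∧ σ' * σ = 1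
  isometry : ∀ σ ∈ G, σᵀ * M * σ = M

/-- `ℓ ∈ L^*`, the dual lattice. -/
def InDual {l : ℕ} (M : Matrix (Fin l) (Fin l) ℤ) (ℓ : Fin l → ℚ) : Prop :=
  ∀ x : Fin l → ℤ, ∃ n : ℤ, pairQ M ℓ (fun i => (x i : ℚ)) = n

/-- `c` is a family of Fourier coefficients, supported on `n ≥ 0` and `ℓ ∈ L^*`,
whose associated Fourier series converges to `φ` on `ℍ × (L ⊗ ℂ)`. -/
def FourierRep {l : ℕ} (M : Matrix (Fin l) (Fin l) ℤ) (φ : ℂ → (Fin l → ℂ) → ℂ)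
    (c : ℕ → (Fin l → ℚ) → ℂ) : Prop :=
  (∀ n ℓ, c n ℓ ≠ 0 → InDual M ℓ) ∧
  ∀ τ : ℂ, 0 < τ.im → ∀ z : Fin l → ℂ,
    HasSum (fun p : ℕ × (Fin l → ℚ) =>
      c p.1 p.2 * cexp (2 * (Real.pi : ℂ) * Complex.I *
        ((p.1 : ℂ) * τ + pairC M (qc p.2) z))) (φ τ z)

/-- `φ` is a weak Jacobi form of weight `k` and index `t` associated to the even
positive definite lattice with Gram matrix `M`. -/
def IsWeakJacobiForm {l : ℕ} (M : Matrix (Fin l) (Fin l) ℤ) (k : ℤ) (t : ℕ)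
    (φ : ℂ → (Fin l → ℂ) → ℂ) : Prop :=
  (DifferentiableOn ℂ (fun p : ℂ × (Fin l → ℂ) => φ p.1 p.2)
    ({τ : ℂ | 0 < τ.im} ×ˢ (Set.univ : Set (Fin l → ℂ)))) ∧
  (∀ a b c d : ℤ, a * d - b * c = 1 → ∀ τ : ℂ, 0 < τ.im → ∀ z : Fin l → ℂ,
    φ (((a : ℂ) * τ + (b : ℂ)) / ((c : ℂ) * τ + (d : ℂ)))
        (fun i => z i / ((c : ℂ) * τ + (d : ℂ))) =
      ((c : ℂ) * τ + (d : ℂ)) ^ k *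
        cexp ((t : ℂ) * (Real.pi : ℂ) * Complex.I * (c : ℂ) *
          pairC M z z / ((c : ℂ) * τ + (d : ℂ))) * φ τ z) ∧
  (∀ x y : Fin l → ℤ, ∀ τ : ℂ, 0 < τ.im → ∀ z : Fin l → ℂ,
    φ τ (fun i => z i + (x i : ℂ) * τ + (y i : ℂ)) =
      cexp (-(t : ℂ) * (Real.pi : ℂ) * Complex.I *
        (pairC M (zc x) (zc x) * τ + 2 * pairC M (zc x) z)) * φ τ z) ∧
  (∃ c : ℕ → (Fin l → ℚ) → ℂ, FourierRep M φ c)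

/-- `φ` is invariant under the action of `G` on the lattice variable. -/
def GInvariant {l : ℕ} (G : Set (Matrix (Fin l) (Fin l) ℤ))
    (φ : ℂ → (Fin l → ℂ) → ℂ) : Prop :=
  ∀ σ ∈ G, ∀ τ : ℂ, 0 < τ.im → ∀ z : Fin l → ℂ,
    φ τ ((σ.map (Int.cast : ℤ → ℂ)).mulVec z) = φ τ z

/-- The partial derivative of `φ(τ, 𝔷)` in the `i`-th coordinate of the lattice
variable `𝔷`. -/
def pderiv' {l : ℕ} (i : Fin l) (φ : ℂ → (Fin l → ℂ) → ℂ) (τ : ℂ) (z : Fin l → ℂ) : ℂ :=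
  deriv (fun w : ℂ => φ τ (Function.update z i w)) (z i)

/-- The Jacobian `J(φ_1, ..., φ_{l+1})` of `l+1` Jacobi forms of indices `m j`:
the determinant of the matrix whose first row is `(m_j φ_j)_j` and whose later
rows are the partial derivatives `∂φ_j/∂z_i`. -/
def jacJacobian {l : ℕ} (m : Fin (l + 1) → ℕ) (φ : Fin (l + 1) → ℂ → (Fin l → ℂ) → ℂ)
    (τ : ℂ) (z : Fin l → ℂ) : ℂ :=
  Matrix.det (Matrix.of fun i j : Fin (l + 1) =>
    Fin.cases ((m j : ℂ) * φ j τ z) (fun i' : Fin l => pderiv' i' (φ j) τ z) i)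

/-- `f` is a (holomorphic) modular form of weight `k` on `SL₂(ℤ)`, viewed as a
holomorphic function on the upper half-plane with a Fourier expansion supported
on `n ≥ 0`. -/
def IsModularForm (k : ℤ) (f : ℂ → ℂ) : Prop :=
  DifferentiableOn ℂ f {τ : ℂ | 0 < τ.im} ∧
  (∀ a b c d : ℤ, a * d - b * c = 1 → ∀ τ : ℂ, 0 < τ.im →
    f (((a : ℂ) * τ + (b : ℂ)) / ((c : ℂ) * τ + (d : ℂ))) =
      ((c : ℂ) * τ + (d : ℂ)) ^ k * f τ) ∧
  ∃ cf : ℕ → ℂ, ∀ τ : ℂ, 0 < τ.im →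
    HasSum (fun n : ℕ => cf n * cexp (2 * (Real.pi : ℂ) * Complex.I * (n : ℂ) * τ))
      (f τ)

/-- `φ` is not identically zero on `ℍ × (L ⊗ ℂ)`. -/
def NotIdenticallyZero {l : ℕ} (φ : ℂ → (Fin l → ℂ) → ℂ) : Prop :=
  ∃ τ z, 0 < τ.im ∧ φ τ z ≠ 0

/-- `r` is a primitive lattice vector. -/
def PrimitiveVec {l : ℕ} (r : Fin l → ℤ) : Prop :=
  r ≠ 0 ∧ ∀ (n : ℤ) (s : Fin l → ℤ), r = n • s → IsUnit n

/-- The reflection `σ_r : v ↦ v - ⟨r^∨, v⟩ r` belongs to `G`. -/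
def ReflectionIn {l : ℕ} (M : Matrix (Fin l) (Fin l) ℤ)
    (G : Set (Matrix (Fin l) (Fin l) ℤ)) (r : Fin l → ℤ) : Prop :=
  ∃ S ∈ G, ∀ v : Fin l → ℂ,
    (S.map (Int.cast : ℤ → ℂ)).mulVec v =
      fun i => v i - 2 * pairC M (zc r) v / pairC M (zc r) (zc r) * (r i : ℂ)

/-- `(τ, z)` belongs to `D_r(τ)`, i.e. `⟨r^∨, z⟩ ∈ ℤτ ⊕ ℤ`. -/
def OnMirror {l : ℕ} (M : Matrix (Fin l) (Fin l) ℤ) (r : Fin l → ℤ) (τ : ℂ)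
    (z : Fin l → ℂ) : Prop :=
  ∃ a b : ℤ, 2 * pairC M (zc r) z / pairC M (zc r) (zc r) = (a : ℂ) * τ + (b : ℂ)

/-- `J` vanishes precisely, and with multiplicity one, on the sets `D_r(τ)` for
primitive `r ∈ L` whose reflection lies in `G`. -/
def VanishesOrderOneOnMirrors {l : ℕ} (M : Matrix (Fin l) (Fin l) ℤ)
    (G : Set (Matrix (Fin l) (Fin l) ℤ)) (J : ℂ → (Fin l → ℂ) → ℂ) : Prop :=
  ∀ τ : ℂ, 0 < τ.im → ∀ z : Fin l → ℂ,
    ((J τ z = 0) ↔ ∃ r, PrimitiveVec r ∧ ReflectionIn M G r ∧ OnMirror M r τ z) ∧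
    (∀ r, PrimitiveVec r → ReflectionIn M G r → OnMirror M r τ z →
      (∀ r', PrimitiveVec r' → ReflectionIn M G r' → OnMirror M r' τ z →
        r' = r ∨ r' = -r) →
      deriv (fun w : ℂ => J τ (fun i => z i + w * (r i : ℂ))) 0 ≠ 0)

/-- The Fourier expansion of `φ` has a non-zero coefficient of type `f(0, ℓ)`. -/
def HasNonzeroQZeroTerm {l : ℕ} (M : Matrix (Fin l) (Fin l) ℤ)
    (φ : ℂ → (Fin l → ℂ) → ℂ) : Prop :=
  ∃ c : ℕ → (Fin l → ℚ) → ℂ, FourierRep M φ c ∧ ∃ ℓ, c 0 ℓ ≠ 0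

/-- `ψ = P(φ_1, ..., φ_n)` where `P` is a polynomial with coefficients which are
modular forms on `SL₂(ℤ)`, graded so that each monomial has weight `k` and index `t`. -/
def MPolyRep {l n : ℕ} (kj : Fin n → ℤ) (mj : Fin n → ℕ)
    (φ : Fin n → ℂ → (Fin l → ℂ) → ℂ) (k : ℤ) (t : ℕ)
    (c : (Fin n → ℕ) → ℂ → ℂ) (ψ : ℂ → (Fin l → ℂ) → ℂ) : Prop :=
  {d : Fin n → ℕ | c d ≠ 0}.Finite ∧
  (∀ d : Fin n → ℕ, c d ≠ 0 →
    (∑ j, d j * mj j) = t ∧ IsModularForm (k - ∑ j, (d j : ℤ) * kj j) (c d)) ∧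
  (∀ τ : ℂ, 0 < τ.im → ∀ z : Fin l → ℂ,
    ψ τ z = ∑ᶠ d : Fin n → ℕ, c d τ * ∏ j, (φ j τ z) ^ (d j))

/-- The forms `φ_1, ..., φ_n` are algebraically independent over the graded ring
`M_*(SL₂(ℤ))` of modular forms on `SL₂(ℤ)`. -/
def AlgIndepOverM {l n : ℕ} (φ : Fin n → ℂ → (Fin l → ℂ) → ℂ) : Prop :=
  ∀ c : (Fin n → ℕ) → ℂ → ℂ,
    {d : Fin n → ℕ | c d ≠ 0}.Finite →
    (∀ d, c d ≠ 0 → ∃ w : ℤ, IsModularForm w (c d)) →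
    (∀ τ : ℂ, 0 < τ.im → ∀ z : Fin l → ℂ,
      (∑ᶠ d : Fin n → ℕ, c d τ * ∏ j, (φ j τ z) ^ (d j)) = 0) →
    ∀ d τ, 0 < τ.im → c d τ = 0

namespace Matrix

section BlockOneZero

variable {R : Type*} [CommRing R] {l : ℕ}

/-- The block matrix `[[1, 0], [b, N]]`. -/
def blockOneZero (b : Fin l → R) (N : Matrix (Fin l) (Fin l) R) :
    Matrix (Fin (l + 1)) (Fin (l + 1)) R :=
  Matrix.of fun p q => Fin.cases (Fin.cases 1 (fun _ => 0) q) (fun i => Fin.cases (b i) (N i) q) p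

@[simp] lemma det_blockOneZero (b : Fin l → R) (N : Matrix (Fin l) (Fin l) R) :
    (blockOneZero b N).det = N.det := by
  have hsub : (blockOneZero b N).submatrix Fin.succ (Fin.succAbove 0) = N := by
    ext i k
    simp [blockOneZero]
  rw [det_succ_row_zero, Fin.sum_univ_succ, hsub]
  simp [blockOneZero]

@[simp] lemma blockOneZero_mul_apply_zero (b : Fin l → R) (N : Matrix (Fin l) (Fin l) R)
    (A : Matrix (Fin (l + 1)) (Fin (l + 1)) R) (j : Fin (l + 1)) :
    (blockOneZero b N * A) 0 j = A 0 j := by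
  simp [blockOneZero, mul_apply, Fin.sum_univ_succ]

@[simp] lemma blockOneZero_mul_apply_succ (b : Fin l → R) (N : Matrix (Fin l) (Fin l) R)
    (A : Matrix (Fin (l + 1)) (Fin (l + 1)) R) (i : Fin l) (j : Fin (l + 1)) :
    (blockOneZero b N * A) i.succ j = b i * A 0 j + ∑ k, N i k * A k.succ j := by
  simp [blockOneZero, mul_apply, Fin.sum_univ_succ]

end BlockOneZero

lemma det_eq_neg_one_of_mulVec_eq_sub {R : Type*} [CommRing R] {n : Type*} [Fintype n]
    [DecidableEq n] {S : Matrix n n R} {w r : n → R} (hS : ∀ v, S *ᵥ v = v - (w ⬝ᵥ v) • r)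
    (hwr : w ⬝ᵥ r = 2) : S.det = -1 := by
  have hS' : S = 1 + replicateCol Unit (-r) * replicateRow Unit w := by
    refine mulVec_injective (funext fun v => ?_)
    rw [hS, add_mulVec, one_mulVec, ← mulVec_mulVec, sub_eq_add_neg]
    congr 1
    ext i
    simp [mulVec, dotProduct, mul_comm]
  rw [hS', det_one_add_replicateCol_mul_replicateRow, dotProduct_neg, hwr]
  norm_num

end Matrix

section JacobianMatrix

variable {l : ℕ}

def jacobianMatrix (m : Fin (l + 1) → ℂ) (F : Fin (l + 1) → (Fin l → ℂ) → ℂ)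
    (z : Fin l → ℂ) : Matrix (Fin (l + 1)) (Fin (l + 1)) ℂ :=
  Matrix.of fun p j => Fin.cases (m j * F j z) (fun i => fderiv ℂ (F j) z (Pi.single i 1)) p

lemma pderiv'_eq_fderiv {φ : ℂ → (Fin l → ℂ) → ℂ} {τ : ℂ} {z : Fin l → ℂ}
    (h : DifferentiableAt ℂ (φ τ) z) (i : Fin l) :
    pderiv' i φ τ z = fderiv ℂ (φ τ) z (Pi.single i 1) := by
  refine HasDerivAt.deriv ?_
  have hF : HasFDerivAt (φ τ) (fderiv ℂ (φ τ) z) (Function.update z i (z i)) := by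
    rw [Function.update_eq_self]
    exact h.hasFDerivAt
  exact hF.comp_hasDerivAt (z i) (hasDerivAt_update z i (z i))

lemma jacJacobian_eq_det_jacobianMatrix {m : Fin (l + 1) → ℕ}
    {φ : Fin (l + 1) → ℂ → (Fin l → ℂ) → ℂ} {τ : ℂ} {z : Fin l → ℂ}
    (h : ∀ j, DifferentiableAt ℂ (φ j τ) z) :
    jacJacobian m φ τ z = (jacobianMatrix (fun j => (m j : ℂ)) (fun j => φ j τ) z).det := by
  unfold jacJacobian jacobianMatrix
  congr 1
  ext p j
  refine Fin.cases rfl (fun i => ?_) p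
  exact pderiv'_eq_fderiv (h j) i

variable {m : Fin (l + 1) → ℂ} {F : Fin (l + 1) → (Fin l → ℂ) → ℂ}

lemma fderiv_single_eq_sum_of_comp_mulVec_eq {f : (Fin l → ℂ) → ℂ} (hf : Differentiable ℂ f)
    {S : Matrix (Fin l) (Fin l) ℂ} (hS : ∀ v, f (S *ᵥ v) = f v) (z : Fin l → ℂ) (i : Fin l) :
    fderiv ℂ f z (Pi.single i 1) = ∑ k, S k i * fderiv ℂ f (S *ᵥ z) (Pi.single k 1) := by
  let L : (Fin l → ℂ) →L[ℂ] (Fin l → ℂ) := LinearMap.toContinuousLinearMap (Matrix.toLin' S)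
  have hcomp : HasFDerivAt f ((fderiv ℂ f (S *ᵥ z)).comp L) z := by
    have h := (hf (S *ᵥ z)).hasFDerivAt.comp z L.hasFDerivAt
    rwa [show f ∘ S.mulVec = f from funext hS] at h
  rw [hcomp.fderiv, ContinuousLinearMap.comp_apply]
  conv_lhs => rw [show L (Pi.single i 1) = ∑ k, S k i • Pi.single k 1 from by
    simpa [L] using pi_eq_sum_univ' (S.col i)]
  simp [map_sum]

lemma jacobianMatrix_eq_mul_of_comp_mulVec_eq (hF : ∀ j, Differentiable ℂ (F j))
    {S : Matrix (Fin l) (Fin l) ℂ} (hS : ∀ j v, F j (S *ᵥ v) = F j v) (z : Fin l → ℂ) :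
    jacobianMatrix m F z = blockOneZero 0 Sᵀ * jacobianMatrix m F (S *ᵥ z) := by
  ext p j
  refine Fin.cases ?_ (fun i => ?_) p
  · rw [blockOneZero_mul_apply_zero]
    simp only [jacobianMatrix, Matrix.of_apply, Fin.cases_zero, hS]
  · rw [blockOneZero_mul_apply_succ]
    simp only [jacobianMatrix, Matrix.of_apply, Fin.cases_zero, Fin.cases_succ]
    rw [fderiv_single_eq_sum_of_comp_mulVec_eq (hF j) (hS j)]
    simp

lemma det_jacobianMatrix_of_comp_mulVec_eq (hF : ∀ j, Differentiable ℂ (F j))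
    {S : Matrix (Fin l) (Fin l) ℂ} (hS : ∀ j v, F j (S *ᵥ v) = F j v) (z : Fin l → ℂ) :
    (jacobianMatrix m F z).det = S.det * (jacobianMatrix m F (S *ᵥ z)).det := by
  rw [jacobianMatrix_eq_mul_of_comp_mulVec_eq hF hS, Matrix.det_mul, Matrix.det_blockOneZero,
    Matrix.det_transpose]

end JacobianMatrix

section Quasiperiodic

variable {l : ℕ} {m : Fin (l + 1) → ℂ} {F : Fin (l + 1) → (Fin l → ℂ) → ℂ}

lemma fderiv_add_of_eq_exp_mul {f g : (Fin l → ℂ) → ℂ} (hf : Differentiable ℂ f)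
    (hg : Differentiable ℂ g) {c : Fin l → ℂ} (h : ∀ v, f (v + c) = cexp (g v) * f v)
    (u : Fin l → ℂ) :
    fderiv ℂ f (u + c) = cexp (g u) • (fderiv ℂ f u + f u • fderiv ℂ g u) := by
  rw [← fderiv_comp_add_right, funext h,
    ((hg u).hasFDerivAt.cexp.fun_mul (hf u).hasFDerivAt).fderiv, smul_add, smul_comm (f u)]

lemma jacobianMatrix_add_eq_mul (hF : ∀ j, Differentiable ℂ (F j)) {g : (Fin l → ℂ) → ℂ}
    (hg : Differentiable ℂ g) {c : Fin l → ℂ}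
    (h : ∀ j v, F j (v + c) = cexp (m j * g v) * F j v) (u : Fin l → ℂ) :
    jacobianMatrix m F (u + c) =
      blockOneZero (fun i => fderiv ℂ g u (Pi.single i 1)) 1 * jacobianMatrix m F u *
        Matrix.diagonal fun j => cexp (m j * g u) := by
  ext p j
  rw [Matrix.mul_diagonal]
  refine Fin.cases ?_ (fun i => ?_) p
  · rw [blockOneZero_mul_apply_zero]
    simp only [jacobianMatrix, Matrix.of_apply, Fin.cases_zero, h]
    ring
  · rw [blockOneZero_mul_apply_succ]
    simp only [jacobianMatrix, Matrix.of_apply, Fin.cases_zero, Fin.cases_succ]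
    rw [fderiv_add_of_eq_exp_mul (hF j) (hg.const_mul (m j)) (h j),
      fderiv_const_mul (hg u)]
    simp only [_root_.add_apply, _root_.smul_apply, smul_eq_mul,
      one_apply, ite_mul, one_mul, zero_mul, Finset.sum_ite_eq, Finset.mem_univ, if_true]
    ring

lemma det_jacobianMatrix_add (hF : ∀ j, Differentiable ℂ (F j)) {g : (Fin l → ℂ) → ℂ}
    (hg : Differentiable ℂ g) {c : Fin l → ℂ}
    (h : ∀ j v, F j (v + c) = cexp (m j * g v) * F j v) (u : Fin l → ℂ) :
    (jacobianMatrix m F (u + c)).det =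
      (∏ j, cexp (m j * g u)) * (jacobianMatrix m F u).det := by
  rw [jacobianMatrix_add_eq_mul hF hg h, Matrix.det_mul, Matrix.det_mul, Matrix.det_blockOneZero,
    Matrix.det_one, Matrix.det_diagonal]
  ring

end Quasiperiodic

section Lattice

variable {l : ℕ}

lemma pairC_eq_dotProduct_mulVec (M : Matrix (Fin l) (Fin l) ℤ) (v w : Fin l → ℂ) :
    pairC M v w = v ⬝ᵥ (M.map (Int.cast : ℤ → ℂ) *ᵥ w) := by
  simp [pairC, dotProduct, mulVec, Finset.mul_sum, mul_assoc]

lemma pairC_zc_zc (M : Matrix (Fin l) (Fin l) ℤ) (x y : Fin l → ℤ) :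
    pairC M (zc x) (zc y) = ((x ⬝ᵥ (M *ᵥ y) : ℤ) : ℂ) := by
  simp [pairC, zc, dotProduct, mulVec, Finset.mul_sum, mul_assoc]

lemma zc_smul (a : ℤ) (x : Fin l → ℤ) : zc (a • x) = (a : ℂ) • zc x := by
  ext i
  simp [zc]

lemma even_dotProduct_mulVec_self {n : Type*} [Fintype n] [LinearOrder n] {M : Matrix n n ℤ}
    (hsymm : M.IsSymm) (hdiag : ∀ i, Even (M i i)) (r : n → ℤ) : Even (r ⬝ᵥ (M *ᵥ r)) := by
  let N : Matrix n n ℤ :=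
    Matrix.of fun i j => if i < j then M i j else if i = j then M i i / 2 else 0
  have hN : M = N + Nᵀ := by
    ext i j
    simp only [N, Matrix.add_apply, transpose_apply, of_apply]
    rcases lt_trichotomy i j with hij | rfl | hij
    · simp [hij, hij.ne', not_lt_of_gt hij]
    · obtain ⟨k, hk⟩ := hdiag i
      simp only [lt_irrefl, if_true, if_false, hk]
      omega
    · simp [hij, hij.ne', not_lt_of_gt hij, hsymm.apply]
  refine ⟨r ⬝ᵥ (N *ᵥ r), ?_⟩
  rw [hN, add_mulVec, dotProduct_add, mulVec_transpose, dotProduct_comm r (r ᵥ* N),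
    ← dotProduct_mulVec]

lemma IsEvenPosDef.dotProduct_mulVec_self_pos {M : Matrix (Fin l) (Fin l) ℤ}
    (hM : IsEvenPosDef M) {r : Fin l → ℤ} (hr : r ≠ 0) : 0 < r ⬝ᵥ (M *ᵥ r) := by
  have hr' : (fun i => (r i : ℝ)) ≠ 0 := fun h => hr (funext fun i => by
    simpa using congrFun h i)
  have hpos := hM.posDef.dotProduct_mulVec_pos hr'
  have hcast : star (fun i => (r i : ℝ)) ⬝ᵥ (M.map (Int.cast : ℤ → ℝ) *ᵥ fun i => (r i : ℝ)) =
      ((r ⬝ᵥ (M *ᵥ r) : ℤ) : ℝ) := by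
    simp [dotProduct, mulVec]
  exact_mod_cast hcast ▸ hpos

lemma IsEvenPosDef.exists_pairC_self_eq {M : Matrix (Fin l) (Fin l) ℤ} (hM : IsEvenPosDef M)
    {r : Fin l → ℤ} (hr : r ≠ 0) : ∃ s : ℤ, s ≠ 0 ∧ pairC M (zc r) (zc r) = 2 * s := by
  obtain ⟨s, hs⟩ := even_dotProduct_mulVec_self hM.symm hM.even_diag r
  refine ⟨s, ?_, ?_⟩
  · have := hM.dotProduct_mulVec_self_pos hr
    omega
  · rw [pairC_zc_zc, hs]
    push_cast
    ring

lemma det_eq_neg_one_of_mulVec_eq_reflection {M : Matrix (Fin l) (Fin l) ℤ} {r : Fin l → ℤ}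
    (hQ : pairC M (zc r) (zc r) ≠ 0) {S : Matrix (Fin l) (Fin l) ℂ}
    (hS : ∀ v, S *ᵥ v =
      fun i => v i - 2 * pairC M (zc r) v / pairC M (zc r) (zc r) * (r i : ℂ)) :
    S.det = -1 := by
  set w := (2 / pairC M (zc r) (zc r)) • (zc r ᵥ* M.map (Int.cast : ℤ → ℂ))
  have hw : ∀ v, w ⬝ᵥ v = 2 * pairC M (zc r) v / pairC M (zc r) (zc r) := fun v => by
    rw [smul_dotProduct, ← dotProduct_mulVec, ← pairC_eq_dotProduct_mulVec, smul_eq_mul]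
    ring
  refine det_eq_neg_one_of_mulVec_eq_sub (w := w) (r := zc r) (fun v => ?_) ?_
  · rw [hS, hw]
    ext i
    simp [zc]
  · rw [hw, mul_div_assoc, div_self hQ, mul_one]

end Lattice

section JacobiForm

variable {l : ℕ} {M : Matrix (Fin l) (Fin l) ℤ}

def ellipticExponent (M : Matrix (Fin l) (Fin l) ℤ) (τ : ℂ) (x : Fin l → ℤ) (v : Fin l → ℂ) : ℂ :=
  -(Real.pi * I * (pairC M (zc x) (zc x) * τ + 2 * pairC M (zc x) v))

lemma differentiable_ellipticExponent (M : Matrix (Fin l) (Fin l) ℤ) (τ : ℂ) (x : Fin l → ℤ) :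
    Differentiable ℂ (ellipticExponent M τ x) := by
  unfold ellipticExponent
  simp only [pairC]
  fun_prop

lemma ellipticExponent_of_onMirror {r : Fin l → ℤ} {s a b : ℤ} {τ : ℂ} {z : Fin l → ℂ}
    (hQ : pairC M (zc r) (zc r) = 2 * s)
    (hz : 2 * pairC M (zc r) z = (a * τ + b) * pairC M (zc r) (zc r)) :
    ellipticExponent M τ (a • r) (z - (a * τ + b) • zc r) =
      (a * b * s : ℤ) * (2 * Real.pi * I) := by
  simp only [ellipticExponent, zc_smul, pairC_eq_dotProduct_mulVec, smul_dotProduct, mulVec_smul,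
    mulVec_sub, dotProduct_sub, dotProduct_smul, smul_eq_mul] at hQ hz ⊢
  push_cast
  linear_combination (-(Real.pi : ℂ) * I * a) * hz + (Real.pi * I * a * b) * hQ

lemma IsWeakJacobiForm.differentiable {k : ℤ} {t : ℕ} {φ : ℂ → (Fin l → ℂ) → ℂ}
    (hφ : IsWeakJacobiForm M k t φ) {τ : ℂ} (hτ : 0 < τ.im) : Differentiable ℂ (φ τ) := by
  have hopen : IsOpen ({τ : ℂ | 0 < τ.im} ×ˢ (Set.univ : Set (Fin l → ℂ))) :=
    (isOpen_lt continuous_const continuous_im).prod isOpen_univ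
  intro z
  exact (hφ.1.differentiableAt (hopen.mem_nhds (show (τ, z) ∈ _ from ⟨hτ, Set.mem_univ z⟩))).comp z
    ((differentiableAt_const τ).prodMk differentiableAt_id)

lemma IsWeakJacobiForm.apply_add_eq_exp_mul {k : ℤ} {t : ℕ} {φ : ℂ → (Fin l → ℂ) → ℂ}
    (hφ : IsWeakJacobiForm M k t φ) {τ : ℂ} (hτ : 0 < τ.im) (x y : Fin l → ℤ) (v : Fin l → ℂ) :
    φ τ (v + (τ • zc x + zc y)) = cexp (t * ellipticExponent M τ x v) * φ τ v := by
  convert hφ.2.2.1 x y τ hτ v using 2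
  · ext i
    simp only [Pi.add_apply, Pi.smul_apply, zc, smul_eq_mul]
    ring
  · rw [ellipticExponent]
    ring_nf

end JacobiForm

theorem jacobian_vanishes_on_mirrors_general {l : ℕ}
    (M : Matrix (Fin l) (Fin l) ℤ) (hM : IsEvenPosDef M)
    (G : Set (Matrix (Fin l) (Fin l) ℤ))
    (kj : Fin (l + 1) → ℤ) (mj : Fin (l + 1) → ℕ)
    (φ : Fin (l + 1) → ℂ → (Fin l → ℂ) → ℂ)
    (hφ : ∀ j, IsWeakJacobiForm M (kj j) (mj j) (φ j))
    (hφG : ∀ j, GInvariant G (φ j))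
    (r : Fin l → ℤ) (hr : PrimitiveVec r) (hσr : ReflectionIn M G r) :
    ∀ τ : ℂ, 0 < τ.im → ∀ z : Fin l → ℂ,
      OnMirror M r τ z → jacJacobian mj φ τ z = 0 := by
  intro τ hτ z ⟨a, b, hab⟩
  obtain ⟨S, hSG, hS⟩ := hσr
  obtain ⟨s, hs0, hQ⟩ := hM.exists_pairC_self_eq hr.1
  have hQ0 : pairC M (zc r) (zc r) ≠ 0 := by
    rw [hQ]
    exact_mod_cast mul_ne_zero two_ne_zero hs0
  have hF : ∀ j, Differentiable ℂ (φ j τ) := fun j => (hφ j).differentiable hτ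
  have hu : S.map (Int.cast : ℤ → ℂ) *ᵥ z = z - (a * τ + b) • zc r := by
    rw [hS z, hab]
    ext i
    simp [zc]
  have hz : z = z - (a * τ + b) • zc r + (τ • zc (a • r) + zc (b • r)) := by
    ext i
    simp only [Pi.add_apply, Pi.sub_apply, Pi.smul_apply, zc, smul_eq_mul, Int.cast_mul]
    ring
  have hrefl := det_jacobianMatrix_of_comp_mulVec_eq (m := fun j => (mj j : ℂ)) hF
    (fun j => hφG j S hSG τ hτ) z
  rw [det_eq_neg_one_of_mulVec_eq_reflection hQ0 hS, hu] at hrefl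
  have htrans := det_jacobianMatrix_add (m := fun j => (mj j : ℂ)) hF
    (differentiable_ellipticExponent M τ (a • r))
    (fun j => (hφ j).apply_add_eq_exp_mul hτ (a • r) (b • r)) (z - (a * τ + b) • zc r)
  rw [← hz, ellipticExponent_of_onMirror hQ (by rw [← hab]; field_simp)] at htrans
  have hroot (n : ℕ) : cexp (n * ((a * b * s : ℤ) * (2 * Real.pi * I))) = 1 := by
    rw [← mul_assoc]
    exact_mod_cast exp_int_mul_two_pi_mul_I (n * (a * b * s))
  simp only [hroot, Finset.prod_const_one, one_mul] at htrans
  rw [jacJacobian_eq_det_jacobianMatrix fun j => (hF j).differentiableAt]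
  linear_combination (hrefl + htrans) / 2

/-- If `r ∈ L` is a primitive vector whose reflection `σ_r` belongs to
`G`, then the Jacobian `J(φ_1,…,φ_{l+1})` vanishes on the set
`D_r(τ) = {(τ,𝔷) : ⟨r^∨, 𝔷⟩ ∈ ℤτ ⊕ ℤ}`. -/
theorem jacobian_vanishes_on_mirrors {l : ℕ}
    (M : Matrix (Fin l) (Fin l) ℤ) (hM : IsEvenPosDef M)
    (G : Set (Matrix (Fin l) (Fin l) ℤ)) (hG : IsOrthSubgroup M G)
    (kj : Fin (l + 1) → ℤ) (mj : Fin (l + 1) → ℕ)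
    (φ : Fin (l + 1) → ℂ → (Fin l → ℂ) → ℂ)
    (hφ : ∀ j, IsWeakJacobiForm M (kj j) (mj j) (φ j))
    (hφG : ∀ j, GInvariant G (φ j))
    (r : Fin l → ℤ) (hr : PrimitiveVec r) (hσr : ReflectionIn M G r) :
    ∀ τ : ℂ, 0 < τ.im → ∀ z : Fin l → ℂ,
      OnMirror M r τ z → jacJacobian mj φ τ z = 0 :=
  jacobian_vanishes_on_mirrors_general M hM G kj mj φ hφ hφG r hr hσr
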